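/- Let 0 < a* < τ* satisfy the first-order condition 2ρ(a*) + (a* + k/σ)ρ'(a*) = 0, where ρ'(a*) = ∫_ℝ (1/(exp(2a*y)+1))² (y − a*) φ(y−a*) dy. Define w*(y) := 1/(1+exp(2a*y)) and 𝐰(y) := w*(y)² − (w*'(y))² − w*''(y)·w*(y) + w*(y)·w*'(y)·(k/σ + y), where w*' and w*'' denote the first and second derivatives of w*. Then the function 𝐠(θ) := 2∫_ℝ 𝐰(y) φ(y−θ) dy has a unique sign change from positive to negative at a* on [−k/σ, ∞): 𝐠(θ) > 0 for −k/σ ≤ θ < a*, 𝐠(a*) = 0, and 𝐠(θ) < 0 for θ > a*. -/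

import Mathlib

/-
Two Gaussian integrations by parts (Stein's identity `E u'(θ + Z) = E Z u(θ + Z)`) reduce
`𝐠(θ) / 2` to `F(θ) - 2a*(θ + k/σ) S(θ)`, where `F(θ) = E w*(θ + Z)²` and
`S(θ) = E (1 - w*) w*² (θ + Z)`, and they turn the first-order condition into
`F(a*) = 2a*(a* + k/σ) S(a*)`. Since `1 - w*` is increasing and the Gaussian location family has
a monotone likelihood ratio, a Chebyshev-type correlation inequality shows that `F / S` is
nonincreasing, while `θ ↦ 2a*(θ + k/σ)` is strictly increasing; so the difference changes sign
exactly at `a*`.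
-/

open Real MeasureTheory

/-- The standard normal density. -/
noncomputable def gaussPdf (x : ℝ) : ℝ :=
  (Real.sqrt (2 * Real.pi))⁻¹ * Real.exp (-(x ^ 2) / 2)

/-- ρ(a) = ∫ (1/(exp(2ay)+1))² φ(y−a) dy. -/
noncomputable def ρ (a : ℝ) : ℝ :=
  ∫ y : ℝ, (1 / (Real.exp (2 * a * y) + 1)) ^ 2 * gaussPdf (y - a)

lemma gaussPdf_pos (x : ℝ) : 0 < gaussPdf x := by
  unfold gaussPdf
  positivity

@[fun_prop]
lemma continuous_gaussPdf : Continuous gaussPdf := by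
  unfold gaussPdf
  fun_prop

lemma hasDerivAt_gaussPdf_sub (θ y : ℝ) :
    HasDerivAt (fun y => gaussPdf (y - θ)) (-((y - θ) * gaussPdf (y - θ))) y := by
  have h : HasDerivAt (fun y => -((y - θ) ^ 2) / 2) (-(y - θ)) y := by
    simpa [neg_div, neg_mul_eq_mul_neg] using
      (((hasDerivAt_id y).sub_const θ).pow 2).neg.div_const 2
  exact (h.exp.const_mul (√(2 * π))⁻¹).congr_deriv (by simp only [gaussPdf]; ring)

lemma integrable_gaussPdf_sub (θ : ℝ) : Integrable fun y => gaussPdf (y - θ) := by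
  refine (((integrable_exp_neg_mul_sq (b := 1 / 2) (by norm_num)).const_mul
    (√(2 * π))⁻¹).comp_sub_right θ).congr (ae_of_all _ fun y => ?_)
  simp only [gaussPdf]
  ring_nf

lemma integrable_sub_mul_gaussPdf_sub (θ : ℝ) :
    Integrable fun y => (y - θ) * gaussPdf (y - θ) := by
  refine (((integrable_mul_exp_neg_mul_sq (b := 1 / 2) (by norm_num)).const_mul
    (√(2 * π))⁻¹).comp_sub_right θ).congr (ae_of_all _ fun y => ?_)
  simp only [gaussPdf]
  ring_nf

lemma integrable_mul_gaussPdf_sub {f : ℝ → ℝ} (hf : AEStronglyMeasurable f) {C : ℝ}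
    (hC : ∀ y, ‖f y‖ ≤ C) (θ : ℝ) : Integrable fun y => f y * gaussPdf (y - θ) :=
  (integrable_gaussPdf_sub θ).bdd_mul hf (ae_of_all _ hC)

lemma integrable_mul_sub_mul_gaussPdf_sub {f : ℝ → ℝ} (hf : AEStronglyMeasurable f)
    {C : ℝ} (hC : ∀ y, ‖f y‖ ≤ C) (θ : ℝ) :
    Integrable fun y => f y * (y - θ) * gaussPdf (y - θ) := by
  simpa only [mul_assoc] using (integrable_sub_mul_gaussPdf_sub θ).bdd_mul hf (ae_of_all _ hC)

lemma gaussPdf_sub_mul_gaussPdf_sub_le {θ₁ θ₂ y z : ℝ} (hθ : θ₁ ≤ θ₂) (hyz : y ≤ z) :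
    gaussPdf (y - θ₂) * gaussPdf (z - θ₁) ≤ gaussPdf (y - θ₁) * gaussPdf (z - θ₂) := by
  simp only [gaussPdf, mul_mul_mul_comm _ (exp _), ← exp_add]
  refine mul_le_mul_of_nonneg_left (exp_le_exp.2 ?_) (by positivity)
  nlinarith [mul_nonneg (sub_nonneg.2 hθ) (sub_nonneg.2 hyz)]

theorem integral_mul_mul_integral_le_of_monotone {α : Type*} [LinearOrder α]
    [MeasurableSpace α] {μ : Measure α} [SFinite μ] {f p q : α → ℝ} (hf : Monotone f)
    (hpq : ∀ ⦃y z⦄, y ≤ z → q y * p z ≤ p y * q z) (hp : Integrable p μ)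
    (hq : Integrable q μ) (hfp : Integrable (fun x => f x * p x) μ)
    (hfq : Integrable (fun x => f x * q x) μ) :
    (∫ x, f x * p x ∂μ) * ∫ x, q x ∂μ ≤ (∫ x, f x * q x ∂μ) * ∫ x, p x ∂μ := by
  -- Symmetrise: the integrand below is pointwise nonnegative and integrates to twice the gap.
  have hnonneg : ∀ z : α × α, 0 ≤ (f z.1 - f z.2) * (q z.1 * p z.2 - p z.1 * q z.2) := by
    rintro ⟨y, z⟩
    rcases le_total y z with h | h
    · exact mul_nonneg_of_nonpos_of_nonpos (sub_nonpos.2 (hf h)) (sub_nonpos.2 (hpq h))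
    · exact mul_nonneg (sub_nonneg.2 (hf h)) (by linarith [hpq h])
  have h₁ := hfq.mul_prod hp
  have h₂ := hfp.mul_prod hq
  have h₃ := hq.mul_prod hfp
  have h₄ := hp.mul_prod hfq
  have hexpand : ∫ z, (f z.1 - f z.2) * (q z.1 * p z.2 - p z.1 * q z.2) ∂μ.prod μ =
      2 * ((∫ x, f x * q x ∂μ) * (∫ x, p x ∂μ) - (∫ x, f x * p x ∂μ) * ∫ x, q x ∂μ) := by
    calc _ = ∫ z, (f z.1 * q z.1 * p z.2 - f z.1 * p z.1 * q z.2 -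
          (q z.1 * (f z.2 * p z.2) - p z.1 * (f z.2 * q z.2))) ∂μ.prod μ := by
          congr 1; ext z; ring
      _ = _ := by
          rw [integral_sub, integral_sub h₁ h₂, integral_sub h₃ h₄]
          · rw [integral_prod_mul (fun x => f x * q x) p,
              integral_prod_mul (fun x => f x * p x) q, integral_prod_mul q (fun x => f x * p x),
              integral_prod_mul p (fun x => f x * q x)]
            ring
          exacts [h₁.sub h₂, h₃.sub h₄]
  have := hexpand ▸ integral_nonneg hnonneg
  linarith

noncomputable def gaussMean (f : ℝ → ℝ) (θ : ℝ) : ℝ :=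
  ∫ y, f y * gaussPdf (y - θ)

theorem gaussMean_deriv_eq_gaussMean_mul_sub {u u' : ℝ → ℝ} (hu : ∀ y, HasDerivAt u (u' y) y)
    {C C' : ℝ} (hC : ∀ y, ‖u y‖ ≤ C) (hC' : ∀ y, ‖u' y‖ ≤ C') (θ : ℝ) :
    gaussMean u' θ = gaussMean (fun y => u y * (y - θ)) θ := by
  have hu_cont : Continuous u := continuous_iff_continuousAt.2 fun y => (hu y).continuousAt
  have hu'_meas : Measurable u' := funext (fun y => (hu y).deriv) ▸ measurable_deriv u
  have hi₁ := integrable_mul_gaussPdf_sub hu'_meas.aestronglyMeasurable hC' θ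
  have hi₂ := integrable_mul_sub_mul_gaussPdf_sub hu_cont.aestronglyMeasurable hC θ
  have hderiv : ∀ y, HasDerivAt (fun y => u y * gaussPdf (y - θ))
      (u' y * gaussPdf (y - θ) - u y * (y - θ) * gaussPdf (y - θ)) y := fun y =>
    ((hu y).mul (hasDerivAt_gaussPdf_sub θ y)).congr_deriv (by ring)
  have h := integral_eq_zero_of_hasDerivAt_of_integrable hderiv (hi₁.sub hi₂)
    (integrable_mul_gaussPdf_sub hu_cont.aestronglyMeasurable hC θ)
  rwa [integral_sub hi₁ hi₂, sub_eq_zero] at h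

theorem gaussMean_stein_second_order {w : ℝ → ℝ} (hw : Differentiable ℝ w)
    (hw' : Differentiable ℝ (deriv w)) {C₀ C₁ C₂ : ℝ} (hC₀ : ∀ y, ‖w y‖ ≤ C₀)
    (hC₁ : ∀ y, ‖deriv w y‖ ≤ C₁) (hC₂ : ∀ y, ‖deriv (deriv w) y‖ ≤ C₂) (c θ : ℝ) :
    gaussMean (fun y => w y ^ 2 - deriv w y ^ 2 - deriv (deriv w) y * w y +
        w y * deriv w y * (c + y)) θ =
      gaussMean (fun y => w y ^ 2) θ + (c + θ) * gaussMean (fun y => w y * deriv w y) θ := by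
  have hu : ∀ y, HasDerivAt (fun y => w y * deriv w y)
      (deriv w y * deriv w y + w y * deriv (deriv w) y) y := fun y =>
    (hw y).hasDerivAt.mul (hw' y).hasDerivAt
  have hu_le : ∀ y, ‖w y * deriv w y‖ ≤ C₀ * C₁ := fun y => norm_mul_le_of_le (hC₀ y) (hC₁ y)
  have hu'_le : ∀ y, ‖deriv w y * deriv w y + w y * deriv (deriv w) y‖ ≤ C₁ * C₁ + C₀ * C₂ :=
    fun y => norm_add_le_of_le (norm_mul_le_of_le (hC₁ y) (hC₁ y))
      (norm_mul_le_of_le (hC₀ y) (hC₂ y))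
  have hstein := gaussMean_deriv_eq_gaussMean_mul_sub hu hu_le hu'_le θ
  have hw_meas : Measurable w := hw.continuous.measurable
  have hw'_meas : Measurable (deriv w) := measurable_deriv w
  have hw''_meas : Measurable (deriv (deriv w)) := measurable_deriv _
  have hA := integrable_mul_gaussPdf_sub (by fun_prop)
    (fun y => (norm_pow_le _ 2).trans (pow_le_pow_left₀ (norm_nonneg _) (hC₀ y) 2)) θ
  have hB := integrable_mul_gaussPdf_sub (by fun_prop) hu_le θ
  have hD := integrable_mul_gaussPdf_sub (by fun_prop) hu'_le θ
  have hE := integrable_mul_sub_mul_gaussPdf_sub (by fun_prop) hu_le θ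
  unfold gaussMean at hstein ⊢
  beta_reduce at hstein ⊢
  calc _ = ∫ y, (w y ^ 2 * gaussPdf (y - θ) +
          (c + θ) * (w y * deriv w y * gaussPdf (y - θ))) -
        ((deriv w y * deriv w y + w y * deriv (deriv w) y) * gaussPdf (y - θ) -
          w y * deriv w y * (y - θ) * gaussPdf (y - θ)) := by
        congr 1; ext y; ring
    _ = _ := by
      rw [integral_sub, integral_add hA (hB.const_mul _), integral_const_mul,
        integral_sub hD hE, hstein, sub_self, sub_zero]
      exacts [hA.add (hB.const_mul _), hD.sub hE]

theorem gaussMean_mul_mul_gaussMean_le_of_monotone {f h : ℝ → ℝ} (hf : Monotone f) {C D : ℝ}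
    (hfC : ∀ y, ‖f y‖ ≤ C) (hh_meas : AEStronglyMeasurable h) (hh : ∀ y, 0 ≤ h y)
    (hhD : ∀ y, ‖h y‖ ≤ D) {θ₁ θ₂ : ℝ} (hθ : θ₁ ≤ θ₂) :
    gaussMean (fun y => f y * h y) θ₁ * gaussMean h θ₂ ≤
      gaussMean (fun y => f y * h y) θ₂ * gaussMean h θ₁ := by
  have hi := integrable_mul_gaussPdf_sub hh_meas hhD
  have hfi : ∀ θ, Integrable fun y => f y * (h y * gaussPdf (y - θ)) := fun θ =>
    (hi θ).bdd_mul hf.measurable.aestronglyMeasurable (ae_of_all _ hfC)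
  have hpq : ∀ ⦃y z : ℝ⦄, y ≤ z → h y * gaussPdf (y - θ₂) * (h z * gaussPdf (z - θ₁)) ≤
      h y * gaussPdf (y - θ₁) * (h z * gaussPdf (z - θ₂)) := fun y z hyz => by
    have := mul_le_mul_of_nonneg_left (gaussPdf_sub_mul_gaussPdf_sub_le hθ hyz)
      (mul_nonneg (hh y) (hh z))
    linarith
  simpa only [gaussMean, mul_assoc] using
    integral_mul_mul_integral_le_of_monotone hf hpq (hi θ₁) (hi θ₂) (hfi θ₁) (hfi θ₂)

-- The paper's `w*` is `logisticWeight (2 * a*)`.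
noncomputable def logisticWeight (b y : ℝ) : ℝ := 1 - sigmoid (b * y)

section logisticWeight

variable (b : ℝ)

lemma one_div_one_add_exp_eq_logisticWeight (y : ℝ) :
    1 / (1 + exp (b * y)) = logisticWeight b y := by
  rw [logisticWeight, ← sigmoid_neg, sigmoid_def, neg_neg, one_div]

lemma logisticWeight_pos (y : ℝ) : 0 < logisticWeight b y :=
  sub_pos.2 (sigmoid_lt_one _)

lemma logisticWeight_lt_one (y : ℝ) : logisticWeight b y < 1 :=
  sub_lt_self _ (sigmoid_pos _)

@[fun_prop]
lemma continuous_logisticWeight : Continuous (logisticWeight b) := by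
  unfold logisticWeight
  fun_prop

lemma exists_norm_comp_logisticWeight_le {P : ℝ → ℝ} (hP : Continuous P) :
    ∃ C, ∀ y, ‖P (logisticWeight b y)‖ ≤ C := by
  obtain ⟨C, hC⟩ := (isCompact_Icc (a := (0 : ℝ)) (b := 1)).exists_bound_of_continuousOn
    hP.continuousOn
  exact ⟨C, fun y => hC _ ⟨(logisticWeight_pos b y).le, (logisticWeight_lt_one b y).le⟩⟩

lemma hasDerivAt_logisticWeight (y : ℝ) :
    HasDerivAt (logisticWeight b)
      (-b * (logisticWeight b y * (1 - logisticWeight b y))) y :=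
  (((hasDerivAt_sigmoid (b * y)).comp y ((hasDerivAt_id' y).const_mul b)).const_sub
    1).congr_deriv (by simp only [logisticWeight, sub_sub_cancel]; ring)

lemma deriv_logisticWeight :
    deriv (logisticWeight b) = fun y => -b * (logisticWeight b y * (1 - logisticWeight b y)) :=
  funext fun y => (hasDerivAt_logisticWeight b y).deriv

lemma hasDerivAt_deriv_logisticWeight (y : ℝ) :
    HasDerivAt (deriv (logisticWeight b)) (b ^ 2 * (logisticWeight b y *
      (1 - logisticWeight b y) * (1 - 2 * logisticWeight b y))) y := by
  rw [deriv_logisticWeight]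
  have h := hasDerivAt_logisticWeight b y
  exact ((h.mul (h.const_sub 1)).const_mul (-b)).congr_deriv (by ring)

lemma differentiable_logisticWeight : Differentiable ℝ (logisticWeight b) :=
  fun y => (hasDerivAt_logisticWeight b y).differentiableAt

lemma differentiable_deriv_logisticWeight : Differentiable ℝ (deriv (logisticWeight b)) :=
  fun y => (hasDerivAt_deriv_logisticWeight b y).differentiableAt

lemma monotone_one_sub_logisticWeight {b : ℝ} (hb : 0 ≤ b) :
    Monotone fun y => 1 - logisticWeight b y := fun y z hyz => by
  simpa only [logisticWeight, sub_sub_cancel] using sigmoid_le (mul_le_mul_of_nonneg_left hyz hb)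

lemma gaussMean_logisticWeight_mul_deriv (θ : ℝ) :
    gaussMean (fun y => logisticWeight b y * deriv (logisticWeight b) y) θ =
      -b * gaussMean (fun y => (1 - logisticWeight b y) * logisticWeight b y ^ 2) θ := by
  simp only [gaussMean, deriv_logisticWeight, ← integral_const_mul]
  congr 1; ext y; ring

lemma gaussMean_logisticWeight_second_order (b c θ : ℝ) :
    gaussMean (fun y => logisticWeight b y ^ 2 - deriv (logisticWeight b) y ^ 2 -
        deriv (deriv (logisticWeight b)) y * logisticWeight b y +
        logisticWeight b y * deriv (logisticWeight b) y * (c + y)) θ =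
      gaussMean (fun y => logisticWeight b y ^ 2) θ -
        b * (c + θ) *
          gaussMean (fun y => (1 - logisticWeight b y) * logisticWeight b y ^ 2) θ := by
  obtain ⟨C₀, hC₀⟩ := exists_norm_comp_logisticWeight_le b (P := id) continuous_id
  obtain ⟨C₁, hC₁⟩ := exists_norm_comp_logisticWeight_le b
    (P := fun t => -b * (t * (1 - t))) (by fun_prop)
  obtain ⟨C₂, hC₂⟩ := exists_norm_comp_logisticWeight_le b
    (P := fun t => b ^ 2 * (t * (1 - t) * (1 - 2 * t))) (by fun_prop)
  rw [gaussMean_stein_second_order (differentiable_logisticWeight b)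
    (differentiable_deriv_logisticWeight b) hC₀
    (fun y => by rw [deriv_logisticWeight]; exact hC₁ y)
    (fun y => by rw [(hasDerivAt_deriv_logisticWeight b y).deriv]; exact hC₂ y),
    gaussMean_logisticWeight_mul_deriv]
  ring

lemma gaussMean_logisticWeight_sq_mul_sub (θ : ℝ) :
    gaussMean (fun y => logisticWeight b y ^ 2 * (y - θ)) θ =
      -(2 * b) * gaussMean (fun y => (1 - logisticWeight b y) * logisticWeight b y ^ 2) θ := by
  have hu : ∀ y, HasDerivAt (fun y => logisticWeight b y ^ 2)
      (-(2 * b) * ((1 - logisticWeight b y) * logisticWeight b y ^ 2)) y := fun y =>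
    ((hasDerivAt_logisticWeight b y).pow 2).congr_deriv (by ring)
  obtain ⟨C, hC⟩ := exists_norm_comp_logisticWeight_le b (P := fun t => t ^ 2) (by fun_prop)
  obtain ⟨C', hC'⟩ := exists_norm_comp_logisticWeight_le b
    (P := fun t => -(2 * b) * ((1 - t) * t ^ 2)) (by fun_prop)
  rw [← gaussMean_deriv_eq_gaussMean_mul_sub hu hC hC' θ]
  simp only [gaussMean, ← integral_const_mul, mul_assoc]

lemma gaussMean_one_sub_logisticWeight_mul_sq_pos (θ : ℝ) :
    0 < gaussMean (fun y => (1 - logisticWeight b y) * logisticWeight b y ^ 2) θ := by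
  obtain ⟨C, hC⟩ := exists_norm_comp_logisticWeight_le b
    (P := fun t => (1 - t) * t ^ 2) (by fun_prop)
  have hpos : ∀ y, 0 < (1 - logisticWeight b y) * logisticWeight b y ^ 2 * gaussPdf (y - θ) :=
    fun y => mul_pos (mul_pos (sub_pos.2 (logisticWeight_lt_one b y))
      (pow_pos (logisticWeight_pos b y) 2)) (gaussPdf_pos _)
  exact integral_pos_of_integrable_nonneg_nonzero (by fun_prop)
    (integrable_mul_gaussPdf_sub (by fun_prop) hC θ) (fun y => (hpos y).le) (hpos 0).ne'

lemma gaussMean_logisticWeight_cross_le {b : ℝ} (hb : 0 ≤ b) {θ₁ θ₂ : ℝ} (hθ : θ₁ ≤ θ₂) :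
    gaussMean (fun y => (1 - logisticWeight b y) * logisticWeight b y ^ 2) θ₁ *
        gaussMean (fun y => logisticWeight b y ^ 2) θ₂ ≤
      gaussMean (fun y => (1 - logisticWeight b y) * logisticWeight b y ^ 2) θ₂ *
        gaussMean (fun y => logisticWeight b y ^ 2) θ₁ := by
  obtain ⟨C, hC⟩ := exists_norm_comp_logisticWeight_le b (P := fun t => 1 - t) (by fun_prop)
  obtain ⟨D, hD⟩ := exists_norm_comp_logisticWeight_le b (P := fun t => t ^ 2) (by fun_prop)
  exact gaussMean_mul_mul_gaussMean_le_of_monotone (monotone_one_sub_logisticWeight hb) hC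
    (by fun_prop) (fun y => sq_nonneg _) hD hθ

end logisticWeight

lemma ρ_eq_gaussMean (a : ℝ) : ρ a = gaussMean (fun y => logisticWeight (2 * a) y ^ 2) a := by
  simp only [ρ, gaussMean, add_comm (exp _) 1, one_div_one_add_exp_eq_logisticWeight]

-- `hcross` says that `F / S` is antitone.
theorem sub_mul_sign_change_of_cross_le {F S L : ℝ → ℝ} {a : ℝ} (hS : ∀ θ, 0 < S θ)
    (hcross : ∀ θ₁ θ₂, θ₁ ≤ θ₂ → S θ₁ * F θ₂ ≤ S θ₂ * F θ₁) (hL : StrictMono L)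
    (ha : F a = L a * S a) :
    (∀ θ < a, 0 < F θ - L θ * S θ) ∧ ∀ θ, a < θ → F θ - L θ * S θ < 0 := by
  refine ⟨fun θ hθ => ?_, fun θ hθ => ?_⟩
  · have h₁ := hcross θ a hθ.le
    have h₂ := mul_lt_mul_of_pos_right (hL hθ) (mul_pos (hS θ) (hS a))
    rw [ha] at h₁
    nlinarith [hS a]
  · have h₁ := hcross a θ hθ.le
    have h₂ := mul_lt_mul_of_pos_right (hL hθ) (mul_pos (hS θ) (hS a))
    rw [ha] at h₁
    nlinarith [hS a]

theorem stmt_16_general (σ k astar : ℝ) (ha0 : 0 < astar)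
    (hFOC : 2 * ρ astar + (astar + k / σ) *
      (∫ y : ℝ, (1 / (Real.exp (2 * astar * y) + 1)) ^ 2 *
        ((y - astar) * gaussPdf (y - astar))) = 0)
    (wstar : ℝ → ℝ) (hw : ∀ y, wstar y = 1 / (1 + Real.exp (2 * astar * y)))
    (bw : ℝ → ℝ)
    (hbw : ∀ y, bw y = (wstar y) ^ 2 - (deriv wstar y) ^ 2 -
      deriv (deriv wstar) y * wstar y + wstar y * deriv wstar y * (k / σ + y))
    (bg : ℝ → ℝ)
    (hbg : ∀ θ, bg θ = 2 * ∫ y : ℝ, bw y * gaussPdf (y - θ)) :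
    (∀ θ : ℝ, -(k / σ) ≤ θ → θ < astar → 0 < bg θ) ∧
    bg astar = 0 ∧
    (∀ θ : ℝ, astar < θ → bg θ < 0) := by
  obtain rfl : wstar = logisticWeight (2 * astar) :=
    funext fun y => (hw y).trans (one_div_one_add_exp_eq_logisticWeight _ y)
  set w := logisticWeight (2 * astar)
  set F := gaussMean fun y => w y ^ 2
  set S := gaussMean fun y => (1 - w y) * w y ^ 2
  have hg : ∀ θ, bg θ = 2 * (F θ - 2 * astar * (θ + k / σ) * S θ) := fun θ => by
    rw [hbg]
    change 2 * gaussMean bw θ = _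
    rw [show bw = _ from funext hbw, gaussMean_logisticWeight_second_order]
    ring
  have hFa : F astar = 2 * astar * (astar + k / σ) * S astar := by
    have hI : ∫ y, (1 / (exp (2 * astar * y) + 1)) ^ 2 * ((y - astar) * gaussPdf (y - astar)) =
        gaussMean (fun y => w y ^ 2 * (y - astar)) astar := by
      unfold gaussMean
      congr 1; ext y
      rw [add_comm (exp _), one_div_one_add_exp_eq_logisticWeight, mul_assoc]
    rw [ρ_eq_gaussMean, hI, gaussMean_logisticWeight_sq_mul_sub] at hFOC
    linear_combination hFOC / 2
  obtain ⟨hlt, hgt⟩ := sub_mul_sign_change_of_cross_le (F := F) (S := S)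
    (L := fun θ => 2 * astar * (θ + k / σ))
    (gaussMean_one_sub_logisticWeight_mul_sq_pos (2 * astar))
    (fun _ _ => gaussMean_logisticWeight_cross_le (by positivity))
    ((strictMono_id.add_const (k / σ)).const_mul (by positivity)) hFa
  refine ⟨fun θ _ hθ => ?_, ?_, fun θ hθ => ?_⟩ <;> rw [hg]
  · linarith [hlt θ hθ]
  · rw [hFa]; ring
  · linarith [hgt θ hθ]

/-- Under the first-order condition for a* ∈ (0, τ*), the function
𝐠(θ) = 2∫ 𝐰(y)φ(y−θ) dy, where 𝐰 is built from w*(y) = 1/(1+exp(2a*y)) and its first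
and second derivatives, has a unique sign change from positive to negative at a* on
[−k/σ, ∞). -/
theorem stmt_16 (σ k τstar astar : ℝ) (hσ : 0 < σ) (hk : 0 < k)
    (hτ0 : 0 ≤ τstar)
    (hτmax : ∀ τ : ℝ, 0 ≤ τ → τ ^ 2 * ρ τ ≤ τstar ^ 2 * ρ τstar)
    (ha0 : 0 < astar) (haτ : astar < τstar)
    (hFOC : 2 * ρ astar + (astar + k / σ) *
      (∫ y : ℝ, (1 / (Real.exp (2 * astar * y) + 1)) ^ 2 *
        ((y - astar) * gaussPdf (y - astar))) = 0)
    (wstar : ℝ → ℝ) (hw : ∀ y, wstar y = 1 / (1 + Real.exp (2 * astar * y)))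
    (bw : ℝ → ℝ)
    (hbw : ∀ y, bw y = (wstar y) ^ 2 - (deriv wstar y) ^ 2 -
      deriv (deriv wstar) y * wstar y + wstar y * deriv wstar y * (k / σ + y))
    (bg : ℝ → ℝ)
    (hbg : ∀ θ, bg θ = 2 * ∫ y : ℝ, bw y * gaussPdf (y - θ)) :
    (∀ θ : ℝ, -(k / σ) ≤ θ → θ < astar → 0 < bg θ) ∧
    bg astar = 0 ∧
    (∀ θ : ℝ, astar < θ → bg θ < 0) :=
  stmt_16_general σ k astar ha0 hFOC wstar hw bw hbw bg hbg
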